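/- Let n ≥ 1, let w ∈ ℝ^n be a probability vector with strictly positive entries, let c ∈ ℝ^n and ρ > 0. Then sup { Σ_i p_i·c_i : p ∈ U_w^ρ } = inf { η + ρ·λ + λ·Σ_i w_i·( e^{(c_i − η)/λ} − 1 ) : λ > 0, η ∈ ℝ }. (Strong Lagrangian duality for the KL-divergence-constrained worst-case expectation.) -/

import Mathlib

/-!
Weak duality is the Fenchel–Young inequality `t * s ≤ klFun t + (exp s - 1)` at `t = pᵢ / wᵢ`,
`s = (cᵢ - η) / λ`, summed against `w`.

For the converse let `M = max c` and `W` the `w`-mass of `{c = M}`. If `-log W ≤ ρ`, then `w`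
conditioned on `{c = M}` is feasible with value `M`, while the dual objective at `η = M` is at most
`M + ρ λ` for every `λ > 0`. Otherwise the Gibbs tilts `pᵦ ∝ w e^{β c}` have a relative entropy to
`w` that is continuous in `β`, vanishes at `β = 0` and tends to `-log W > ρ` as `β → ∞`. At a `β`
where it equals `ρ`, the dual objective at `λ = 1/β`, `η = λ log ∑ᵢ wᵢ e^{β cᵢ}` equals the primal
value of `pᵦ`, so there is no duality gap.
-/

open Real Finset Filter Topology InformationTheory

noncomputable section

def relEntropy {ι : Type*} [Fintype ι] (p w : ι → ℝ) : ℝ := ∑ i, p i * log (p i / w i)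

def dualObjective {ι : Type*} [Fintype ι] (w c : ι → ℝ) (ρ lam η : ℝ) : ℝ :=
  η + ρ * lam + lam * ∑ i, w i * (exp ((c i - η) / lam) - 1)

def partitionFn {ι : Type*} [Fintype ι] (w c : ι → ℝ) (β : ℝ) : ℝ := ∑ i, w i * exp (β * c i)

def tilt {ι : Type*} [Fintype ι] (w c : ι → ℝ) (β : ℝ) (i : ι) : ℝ :=
  w i * exp (β * c i) / partitionFn w c β

def condWeights {ι : Type*} [DecidableEq ι] (w : ι → ℝ) (S : Finset ι) (i : ι) : ℝ :=
  if i ∈ S then w i / ∑ j ∈ S, w j else 0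

end

lemma mul_le_klFun_add_exp_sub_one {t : ℝ} (ht : 0 ≤ t) (s : ℝ) :
    t * s ≤ klFun t + (exp s - 1) := by
  rcases ht.eq_or_lt with rfl | ht
  · simp [klFun_zero, (exp_pos s).le]
  · have h := add_one_le_exp (s - log t)
    rw [exp_sub, exp_log ht, le_div_iff₀ ht] at h
    rw [klFun_apply]
    linarith

lemma tendsto_mul_exp_atBot_nhds_zero : Tendsto (fun x => x * exp x) atBot (𝓝 0) := by
  have h := ((tendsto_pow_mul_exp_neg_atTop_nhds_zero 1).comp tendsto_neg_atBot_atTop).neg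
  simpa [Function.comp_def] using h

lemma tendsto_exp_mul_atTop_of_nonpos {d : ℝ} (hd : d ≤ 0) :
    Tendsto (fun β => exp (β * d)) atTop (𝓝 (if d = 0 then 1 else 0)) := by
  split_ifs with h
  · simp [h]
  · exact tendsto_exp_atBot.comp (tendsto_id.atTop_mul_const_of_neg (hd.lt_of_ne h))

lemma tendsto_mul_mul_exp_mul_atTop_of_nonpos {d : ℝ} (hd : d ≤ 0) :
    Tendsto (fun β => β * d * exp (β * d)) atTop (𝓝 0) := by
  rcases hd.eq_or_lt with rfl | hd
  · simp
  · exact tendsto_mul_exp_atBot_nhds_zero.comp (tendsto_id.atTop_mul_const_of_neg hd)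


lemma condWeights_nonneg {ι : Type*} [DecidableEq ι] {w : ι → ℝ} (hw : ∀ i, 0 ≤ w i)
    (S : Finset ι) (i : ι) : 0 ≤ condWeights w S i := by
  unfold condWeights
  split_ifs
  · exact div_nonneg (hw i) (sum_nonneg fun j _ => hw j)
  · exact le_rfl

lemma csSup_eq_csInf_of_forall_le_of_forall_lt_add {A B : Set ℝ} {a : ℝ} (ha : a ∈ A)
    (hAB : ∀ x ∈ A, ∀ y ∈ B, x ≤ y) (hB : ∀ ε > 0, ∃ y ∈ B, y < a + ε) : sSup A = sInf B := by
  have hA : IsGreatest A a := ⟨ha, fun x hx => le_of_forall_pos_lt_add fun ε hε => by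
    obtain ⟨y, hy, hya⟩ := hB ε hε
    exact (hAB x hx y hy).trans_lt hya⟩
  have hB' : IsGLB B a := ⟨fun y hy => hAB a ha y hy, fun b hb => le_of_forall_pos_lt_add
    fun ε hε => by
      obtain ⟨y, hy, hya⟩ := hB ε hε
      exact (hb hy).trans_lt hya⟩
  obtain ⟨y, hy, -⟩ := hB 1 one_pos
  rw [hA.csSup_eq, hB'.csInf_eq ⟨y, hy⟩]

section Finite

variable {ι : Type*} [Fintype ι] {w p c : ι → ℝ}

lemma sum_mul_klFun_div (hw : ∀ i, 0 < w i) :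
    ∑ i, w i * klFun (p i / w i) = relEntropy p w + ∑ i, w i - ∑ i, p i := by
  rw [relEntropy, ← sum_add_distrib, ← sum_sub_distrib]
  refine sum_congr rfl fun i _ => ?_
  rw [klFun_apply]
  field_simp [(hw i).ne']

lemma sum_mul_le_dualObjective (hw : ∀ i, 0 < w i) (hws : ∑ i, w i = 1) (hp : ∀ i, 0 ≤ p i)
    (hps : ∑ i, p i = 1) {ρ lam : ℝ} (hkl : relEntropy p w ≤ ρ) (hlam : 0 < lam) (η : ℝ) :
    ∑ i, p i * c i ≤ dualObjective w c ρ lam η := by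
  have hterm : ∀ i, p i * c i
      = p i * η + lam * (w i * (p i / w i * ((c i - η) / lam))) := fun i => by
    field_simp [(hw i).ne']
    ring
  calc ∑ i, p i * c i
      = η + lam * ∑ i, w i * (p i / w i * ((c i - η) / lam)) := by
        rw [sum_congr rfl fun i _ => hterm i, sum_add_distrib, ← sum_mul, hps, one_mul,
          mul_sum]
    _ ≤ η + lam * ∑ i, w i * (klFun (p i / w i) + (exp ((c i - η) / lam) - 1)) := by
        gcongr with i
        · exact (hw i).le
        · exact mul_le_klFun_add_exp_sub_one (div_nonneg (hp i) (hw i).le) _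
    _ = η + lam * relEntropy p w + lam * ∑ i, w i * (exp ((c i - η) / lam) - 1) := by
        simp only [mul_add, sum_add_distrib, sum_mul_klFun_div hw, hws, hps]
        ring
    _ ≤ dualObjective w c ρ lam η := by
        unfold dualObjective
        nlinarith

lemma partitionFn_pos [Nonempty ι] (hw : ∀ i, 0 < w i) (c : ι → ℝ) (β : ℝ) :
    0 < partitionFn w c β :=
  sum_pos (fun i _ => mul_pos (hw i) (exp_pos _)) univ_nonempty

lemma partitionFn_zero (hws : ∑ i, w i = 1) (c : ι → ℝ) : partitionFn w c 0 = 1 := by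
  simp [partitionFn, hws]

lemma tilt_nonneg [Nonempty ι] (hw : ∀ i, 0 < w i) (c : ι → ℝ) (β : ℝ) (i : ι) :
    0 ≤ tilt w c β i :=
  div_nonneg (mul_pos (hw i) (exp_pos _)).le (partitionFn_pos hw c β).le

lemma sum_tilt [Nonempty ι] (hw : ∀ i, 0 < w i) (c : ι → ℝ) (β : ℝ) :
    ∑ i, tilt w c β i = 1 := by
  simp only [tilt, ← sum_div]
  exact div_self (partitionFn_pos hw c β).ne'

lemma tilt_sub_const (c : ι → ℝ) (m β : ℝ) : tilt w (fun i => c i - m) β = tilt w c β := by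
  have hexp : ∀ i, exp (β * (c i - m)) = exp (β * c i) * exp (-(β * m)) := fun i => by
    rw [← exp_add]
    ring_nf
  ext i
  simp only [tilt, partitionFn, hexp, ← mul_assoc, ← sum_mul]
  exact mul_div_mul_right _ _ (exp_pos _).ne'

lemma relEntropy_tilt [Nonempty ι] (hw : ∀ i, 0 < w i) (c : ι → ℝ) (β : ℝ) :
    relEntropy (tilt w c β) w = β * ∑ i, tilt w c β i * c i - log (partitionFn w c β) := by
  have hZ := partitionFn_pos hw c β
  have hlog : ∀ i, log (tilt w c β i / w i) = β * c i - log (partitionFn w c β) := fun i => by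
    rw [tilt, div_right_comm, mul_div_cancel_left₀ _ (hw i).ne', log_div (exp_pos _).ne' hZ.ne',
      log_exp]
  simp only [relEntropy, hlog, mul_sub, sum_sub_distrib, ← sum_mul, sum_tilt hw, one_mul,
    mul_sum]
  congr 1
  exact sum_congr rfl fun i _ => by ring

lemma continuous_relEntropy_tilt [Nonempty ι] (hw : ∀ i, 0 < w i) (c : ι → ℝ) :
    Continuous fun β => relEntropy (tilt w c β) w := by
  have hZ : Continuous (partitionFn w c) := by unfold partitionFn; fun_prop
  have hZ0 : ∀ β, partitionFn w c β ≠ 0 := fun β => (partitionFn_pos hw c β).ne'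
  simp only [relEntropy_tilt hw, tilt]
  exact (continuous_id.mul (continuous_finsetSum _ fun i _ =>
    ((by fun_prop : Continuous fun β => w i * exp (β * c i)).div hZ hZ0).mul
      continuous_const)).sub (hZ.log hZ0)

lemma relEntropy_tilt_zero (hws : ∑ i, w i = 1) (c : ι → ℝ) :
    relEntropy (tilt w c 0) w = 0 := by
  simp [relEntropy, tilt, partitionFn_zero hws c]

lemma tendsto_relEntropy_tilt_atTop [Nonempty ι] (hw : ∀ i, 0 < w i) {j : ι}
    (hj : ∀ i, c i ≤ c j) :
    Tendsto (fun β => relEntropy (tilt w c β) w) atTop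
      (𝓝 (-log (∑ i with c i = c j, w i))) := by
  set d : ι → ℝ := fun i => c i - c j
  have hd : ∀ i, d i ≤ 0 := fun i => sub_nonpos.2 (hj i)
  have hW : 0 < ∑ i with c i = c j, w i := sum_pos (fun i _ => hw i) ⟨j, by simp⟩
  have hZ : Tendsto (partitionFn w d) atTop (𝓝 (∑ i with c i = c j, w i)) := by
    rw [sum_filter]
    refine tendsto_finsetSum _ fun i _ => ?_
    simpa [d, sub_eq_zero] using (tendsto_exp_mul_atTop_of_nonpos (hd i)).const_mul (w i)
  have hG : Tendsto (fun β => ∑ i, w i * (β * d i * exp (β * d i))) atTop (𝓝 0) := by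
    simpa using tendsto_finsetSum univ fun i _ =>
      (tendsto_mul_mul_exp_mul_atTop_of_nonpos (hd i)).const_mul (w i)
  -- shifting `c` by its maximum leaves the tilt unchanged and makes every exponent nonpositive
  have heq : ∀ β, relEntropy (tilt w c β) w
      = (∑ i, w i * (β * d i * exp (β * d i))) / partitionFn w d β
        - log (partitionFn w d β) := fun β => by
    rw [← tilt_sub_const c (c j), relEntropy_tilt hw]
    simp only [tilt, mul_sum, sum_div]
    congr 1
    exact sum_congr rfl fun i _ => by ring
  simp only [heq]
  simpa using (hG.div hZ hW.ne').sub (hZ.log hW.ne')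

lemma exists_pos_relEntropy_tilt_eq [Nonempty ι] (hw : ∀ i, 0 < w i) (hws : ∑ i, w i = 1)
    {j : ι} (hj : ∀ i, c i ≤ c j) {ρ : ℝ} (hρ : 0 < ρ)
    (hρW : ρ < -log (∑ i with c i = c j, w i)) :
    ∃ β, 0 < β ∧ relEntropy (tilt w c β) w = ρ := by
  obtain ⟨β₁, hβ₁, hβ₁_pos⟩ :=
    ((tendsto_relEntropy_tilt_atTop hw hj).eventually (eventually_gt_nhds hρW)).and
      (eventually_ge_atTop 0) |>.exists
  obtain ⟨β, hβ, hβρ⟩ := intermediate_value_Icc hβ₁_pos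
    (continuous_relEntropy_tilt hw c).continuousOn
    ⟨(relEntropy_tilt_zero hws c).le.trans hρ.le, hβ₁.le⟩
  refine ⟨β, hβ.1.lt_of_ne ?_, hβρ⟩
  rintro rfl
  exact hρ.ne' (hβρ.symm.trans (relEntropy_tilt_zero hws c))

lemma dualObjective_tilt [Nonempty ι] (hw : ∀ i, 0 < w i) (hws : ∑ i, w i = 1) {ρ β : ℝ}
    (hβ : 0 < β) (hkl : relEntropy (tilt w c β) w = ρ) :
    dualObjective w c ρ β⁻¹ (β⁻¹ * log (partitionFn w c β)) = ∑ i, tilt w c β i * c i := by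
  have hZ := partitionFn_pos hw c β
  have hterm : ∀ i, w i * (exp ((c i - β⁻¹ * log (partitionFn w c β)) / β⁻¹) - 1)
      = tilt w c β i - w i := fun i => by
    rw [show (c i - β⁻¹ * log (partitionFn w c β)) / β⁻¹ = β * c i - log (partitionFn w c β) by
      field_simp, exp_sub, exp_log hZ, tilt]
    ring
  rw [dualObjective, sum_congr rfl fun i _ => hterm i, sum_sub_distrib, sum_tilt hw, hws, ← hkl,
    relEntropy_tilt hw]
  field_simp
  ring

section CondWeights

variable [DecidableEq ι] {S : Finset ι}

lemma sum_condWeights (hS : 0 < ∑ j ∈ S, w j) : ∑ i, condWeights w S i = 1 := by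
  simp only [condWeights, sum_ite_mem, univ_inter, ← sum_div]
  exact div_self hS.ne'

lemma relEntropy_condWeights (hw : ∀ i, 0 < w i) (hS : 0 < ∑ j ∈ S, w j) :
    relEntropy (condWeights w S) w = -log (∑ j ∈ S, w j) := by
  have hterm : ∀ i, condWeights w S i * log (condWeights w S i / w i)
      = condWeights w S i * -log (∑ j ∈ S, w j) := fun i => by
    unfold condWeights
    split_ifs
    · rw [div_div_cancel_left' (hw i).ne', log_inv]
    · simp
  rw [relEntropy, sum_congr rfl fun i _ => hterm i, ← sum_mul, sum_condWeights hS, one_mul]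

lemma sum_condWeights_mul {m : ℝ} (hS : 0 < ∑ j ∈ S, w j) (hc : ∀ i ∈ S, c i = m) :
    ∑ i, condWeights w S i * c i = m := by
  have hterm : ∀ i, condWeights w S i * c i = condWeights w S i * m := fun i => by
    unfold condWeights
    split_ifs with hi
    · rw [hc i hi]
    · simp
  rw [sum_congr rfl fun i _ => hterm i, ← sum_mul, sum_condWeights hS, one_mul]

end CondWeights

lemma dualObjective_le_add_of_le (hw : ∀ i, 0 ≤ w i) {m ρ lam : ℝ} (hc : ∀ i, c i ≤ m)
    (hlam : 0 < lam) :
    dualObjective w c ρ lam m ≤ m + ρ * lam := by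
  have hsum : ∑ i, w i * (exp ((c i - m) / lam) - 1) ≤ 0 :=
    sum_nonpos fun i _ => mul_nonpos_of_nonneg_of_nonpos (hw i) <| sub_nonpos.2 <|
      exp_le_one_iff.2 <| div_nonpos_of_nonpos_of_nonneg (sub_nonpos.2 (hc i)) hlam.le
  unfold dualObjective
  nlinarith

lemma exists_feasible_forall_dualObjective_lt [DecidableEq ι] [Nonempty ι]
    (hw : ∀ i, 0 < w i) (hws : ∑ i, w i = 1) (c : ι → ℝ) {ρ : ℝ} (hρ : 0 < ρ) :
    ∃ p : ι → ℝ, (∀ i, 0 ≤ p i) ∧ ∑ i, p i = 1 ∧ relEntropy p w ≤ ρ ∧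
      ∀ ε > 0, ∃ lam η, 0 < lam ∧ dualObjective w c ρ lam η < ∑ i, p i * c i + ε := by
  obtain ⟨j, hj⟩ := Finite.exists_max c
  have hS : 0 < ∑ i with c i = c j, w i := sum_pos (fun i _ => hw i) ⟨j, by simp⟩
  rcases le_or_gt (-log (∑ i with c i = c j, w i)) ρ with hρW | hρW
  · refine ⟨condWeights w {i | c i = c j}, condWeights_nonneg (fun i => (hw i).le) _,
      sum_condWeights hS, (relEntropy_condWeights hw hS).trans_le hρW,
      fun ε hε => ⟨ε / (2 * ρ), c j, by positivity, ?_⟩⟩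
    rw [sum_condWeights_mul hS fun i hi => (mem_filter.1 hi).2]
    calc dualObjective w c ρ (ε / (2 * ρ)) (c j)
        ≤ c j + ρ * (ε / (2 * ρ)) :=
          dualObjective_le_add_of_le (fun i => (hw i).le) hj (by positivity)
      _ < c j + ε := by
        rw [mul_div_left_comm, div_mul_cancel_right₀ hρ.ne']
        linarith
  · obtain ⟨β, hβ, hkl⟩ := exists_pos_relEntropy_tilt_eq hw hws hj hρ hρW
    refine ⟨tilt w c β, tilt_nonneg hw c β, sum_tilt hw c β, hkl.le,
      fun ε hε => ⟨β⁻¹, β⁻¹ * log (partitionFn w c β), inv_pos.2 hβ, ?_⟩⟩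
    rw [dualObjective_tilt hw hws hβ hkl]
    linarith

end Finite

theorem robust_tuning_strong_duality_general (n : ℕ) (w : Fin n → ℝ)
    (hw : ∀ i, 0 < w i) (hws : ∑ i, w i = 1) (c : Fin n → ℝ) (ρ : ℝ) (hρ : 0 < ρ) :
    sSup {x : ℝ | ∃ p : Fin n → ℝ, (∀ i, 0 ≤ p i) ∧ (∑ i, p i = 1) ∧
        (∑ i, p i * Real.log (p i / w i)) ≤ ρ ∧ x = ∑ i, p i * c i}
      = sInf {x : ℝ | ∃ lam η : ℝ, 0 < lam ∧
          x = η + ρ * lam + lam * ∑ i, w i * (Real.exp ((c i - η) / lam) - 1)} := by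
  have : Nonempty (Fin n) := univ_nonempty_iff.1 (nonempty_of_sum_ne_zero (hws ▸ one_ne_zero))
  obtain ⟨p, hp, hps, hpkl, hgap⟩ := exists_feasible_forall_dualObjective_lt hw hws c hρ
  refine csSup_eq_csInf_of_forall_le_of_forall_lt_add ⟨p, hp, hps, hpkl, rfl⟩ ?_ fun ε hε => ?_
  · rintro _ ⟨q, hq, hqs, hqkl, rfl⟩ _ ⟨lam, η, hlam, rfl⟩
    exact sum_mul_le_dualObjective hw hws hq hqs hqkl hlam η
  · obtain ⟨lam, η, hlam, hlt⟩ := hgap ε hε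
    exact ⟨_, ⟨lam, η, hlam, rfl⟩, hlt⟩

/-- Strong Lagrangian duality for the KL-divergence-constrained worst-case expectation:
`sup { Σ_i p_i·c_i : p ∈ U_w^ρ }`
`= inf { η + ρ·λ + λ·Σ_i w_i·(e^{(c_i - η)/λ} - 1) : λ > 0, η ∈ ℝ }`. -/
theorem robust_tuning_strong_duality (n : ℕ) (hn : 1 ≤ n) (w : Fin n → ℝ)
    (hw : ∀ i, 0 < w i) (hws : ∑ i, w i = 1) (c : Fin n → ℝ) (ρ : ℝ) (hρ : 0 < ρ) :
    sSup {x : ℝ | ∃ p : Fin n → ℝ, (∀ i, 0 ≤ p i) ∧ (∑ i, p i = 1) ∧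
        (∑ i, p i * Real.log (p i / w i)) ≤ ρ ∧ x = ∑ i, p i * c i}
      = sInf {x : ℝ | ∃ lam η : ℝ, 0 < lam ∧
          x = η + ρ * lam + lam * ∑ i, w i * (Real.exp ((c i - η) / lam) - 1)} :=
  robust_tuning_strong_duality_general n w hw hws c ρ hρ
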